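/- Let K be a field and q ∈ K with q nonzero and q^m ≠ 1 for all integers m ≥ 1. Then the following identity holds in the formal power series ring K⟦X⟧: ∑_{n=0}^{∞} X^{n+1} / ∏_{j=0}^{n} ((1 − X q^{j})(1 − X q^{−j})) = X · ∑_{(i₁,i₂,j₁,j₂,k₁,k₂) ∈ ℕ⁶} (−1)^{i₁+j₁+k₁} q^{ i₁(i₁+1)/2 + j₁(j₁+1)/2 + k₁(k₁+1)/2 + (i₁+i₂)(k₁−k₂) } X^{i₁+i₂+j₁+j₂+k₁+k₂} / ((q;q)_{i₁}(q;q)_{i₂}(q;q)_{j₁}(q;q)_{j₂}(q;q)_{k₁}(q;q)_{k₂}). (Both sides are formally summable in K⟦X⟧: the n-th term on the left has X-order n+1, since each factor 1 − Xq^{±j} is invertible in K⟦X⟧, and the term indexed by (i₁,…,k₂) on the right has X-order 1 + i₁+i₂+j₁+j₂+k₁+k₂.) -/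

import Mathlib

/-- The q-Pochhammer symbol `(q;q)_n = ∏_{k=1}^{n} (1 − qᵏ)`. -/
def pochQ {K : Type*} [Field K] (q : K) (n : ℕ) : K :=
  ∏ k ∈ Finset.range n, (1 - q ^ (k + 1))

/-!
Euler's expansions `(cX; q)_∞ = ∑ (-1)ⁿ q^(n choose 2) cⁿ Xⁿ / (q;q)ₙ` and
`1 / (cX; q)_∞ = ∑ cⁿ Xⁿ / (q;q)ₙ` factor the `n`-th term of the inverted Habiro series as
`1 / ∏_{j ≤ n} (1 - qʲX)(1 - q⁻ʲX) = [(qX; q)_∞ / (X; q)_∞] · [(q^(n+1) X; q)_∞ / (q⁻ⁿ X; q)_∞]`,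
and the first bracket is `1 / (1 - X)`, all of whose coefficients are `1`. Expanding that bracket
as a product of two Euler series with indices `i₁, i₂`, the coefficient `1` in front of `Xⁿ` may be
replaced by `∑_{i₁ + i₂ = n} (…)`, which turns `∑ₙ Xⁿ⁺¹ (⋯)` into a sum over `i₁, i₂` with
`n = i₁ + i₂`; expanding the remaining four Euler series gives the six-fold quiver sum. Only
congruences modulo `X^(N+1)` are needed, since those determine the coefficient of `X^N`.
-/

open PowerSeries Finset

section Truncation

variable {R : Type*} [CommRing R]

lemma X_pow_dvd_sub_iff_mk_eq (n : ℕ) (f g : R⟦X⟧) :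
    X ^ n ∣ f - g ↔ Ideal.Quotient.mk (Ideal.span {X ^ n}) f = Ideal.Quotient.mk _ g := by
  rw [Ideal.Quotient.eq, Ideal.mem_span_singleton]

lemma coeff_eq_of_X_pow_dvd_sub {m n : ℕ} (hmn : m < n) {f g : R⟦X⟧} (h : X ^ n ∣ f - g) :
    coeff m f = coeff m g :=
  sub_eq_zero.1 (by simpa using X_pow_dvd_iff.1 h m hmn)

lemma X_pow_dvd_sub_sum_range (n : ℕ) (f : R⟦X⟧) :
    X ^ n ∣ f - ∑ j ∈ range n, C (coeff j f) * X ^ j := by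
  refine X_pow_dvd_iff.2 fun m hm => ?_
  simp [map_sum, hm]

lemma X_pow_dvd_sum_range_sum_range_sub (n : ℕ) (A B : R⟦X⟧) (H : ℕ → R⟦X⟧) :
    X ^ n ∣ ∑ i ∈ range n, ∑ j ∈ range n, C (coeff i A * coeff j B) * X ^ (i + j) * H (i + j)
      - ∑ m ∈ range n, C (coeff m (A * B)) * X ^ m * H m := by
  set F : ℕ → ℕ → R⟦X⟧ := fun i j => C (coeff i A * coeff j B) * X ^ (i + j) * H (i + j)
  have hdiag : ∑ m ∈ range n, C (coeff m (A * B)) * X ^ m * H m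
      = ∑ i ∈ range n, ∑ j ∈ range (n - i), F i j := by
    rw [← sum_range_diag_flip]
    refine sum_congr rfl fun m _ => ?_
    rw [coeff_mul, Nat.sum_antidiagonal_eq_sum_range_succ (fun i j => coeff i A * coeff j B),
      map_sum, sum_mul, sum_mul]
    refine sum_congr rfl fun k hk => ?_
    simp only [F]
    rw [Nat.add_sub_cancel' (Nat.lt_succ_iff.1 (mem_range.1 hk))]
  have hsplit : ∀ i ∈ range n, ∑ j ∈ range n, F i j
      = ∑ j ∈ range (n - i), F i j + ∑ j ∈ Ico (n - i) n, F i j :=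
    fun i _ => (sum_range_add_sum_Ico _ (Nat.sub_le n i)).symm
  rw [hdiag, sum_congr rfl hsplit, sum_add_distrib, add_sub_cancel_left]
  refine dvd_sum fun i _ => dvd_sum fun j hj => ?_
  have hij : n ≤ i + j := by have := mem_Ico.1 hj; omega
  exact dvd_mul_of_dvd_left (dvd_mul_of_dvd_right (pow_dvd_pow X hij) _) _

lemma X_pow_dvd_sum_six_sub (n : ℕ) (A B : R⟦X⟧) (P Q : ℕ → R⟦X⟧) :
    X ^ n ∣ (∑ i1 ∈ range n, ∑ i2 ∈ range n, ∑ j1 ∈ range n, ∑ j2 ∈ range n,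
        ∑ k1 ∈ range n, ∑ k2 ∈ range n,
          C (coeff i1 A * coeff i2 B * (coeff j1 A * coeff j2 B *
            (coeff k1 (P (i1 + i2)) * coeff k2 (Q (i1 + i2))))) *
            X ^ (i1 + i2 + j1 + j2 + k1 + k2))
      - ∑ m ∈ range n, C (coeff m (A * B)) * X ^ m * (A * B * (P m * Q m)) := by
  set T : R⟦X⟧ → R⟦X⟧ := fun f => ∑ j ∈ range n, C (coeff j f) * X ^ j
  -- The factors are listed in reverse so that `simp` nests the sums as on the left.
  have hfactor : (∑ i1 ∈ range n, ∑ i2 ∈ range n, ∑ j1 ∈ range n, ∑ j2 ∈ range n,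
        ∑ k1 ∈ range n, ∑ k2 ∈ range n,
          C (coeff i1 A * coeff i2 B * (coeff j1 A * coeff j2 B *
            (coeff k1 (P (i1 + i2)) * coeff k2 (Q (i1 + i2))))) *
            X ^ (i1 + i2 + j1 + j2 + k1 + k2))
      = ∑ i1 ∈ range n, ∑ i2 ∈ range n, C (coeff i1 A * coeff i2 B) * X ^ (i1 + i2) *
          (T (Q (i1 + i2)) * T (P (i1 + i2)) * (T B * T A)) := by
    simp only [T, mul_sum, sum_mul]
    refine sum_congr rfl fun i1 _ => sum_congr rfl fun i2 _ => sum_congr rfl fun j1 _ =>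
      sum_congr rfl fun j2 _ => sum_congr rfl fun k1 _ => sum_congr rfl fun k2 _ => ?_
    simp only [map_mul, pow_add]
    ring
  have hT : ∀ f, Ideal.Quotient.mk (Ideal.span {X ^ n}) (T f) = Ideal.Quotient.mk _ f :=
    fun f => ((X_pow_dvd_sub_iff_mk_eq n _ _).1 (X_pow_dvd_sub_sum_range n f)).symm
  rw [hfactor, X_pow_dvd_sub_iff_mk_eq, ← (X_pow_dvd_sub_iff_mk_eq n _ _).1
    (X_pow_dvd_sum_range_sum_range_sub n A B fun m => A * B * (P m * Q m))]
  simp only [map_sum, map_mul, hT]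
  exact sum_congr rfl fun _ _ => sum_congr rfl fun _ _ => by ring

lemma coeff_X_mul_C_mul_X_pow (c : R) (e N : ℕ) :
    coeff N (X * (C c * X ^ e)) = if e + 1 = N then c else 0 := by
  rw [mul_left_comm, ← pow_succ', coeff_C_mul_X_pow]
  exact if_congr eq_comm rfl rfl

lemma coeff_sum_range_X_pow_succ_mul (N : ℕ) (G : ℕ → R⟦X⟧) :
    coeff N (∑ n ∈ range N, X ^ (n + 1) * G n)
      = coeff N (X * ∑ n ∈ range (N + 1), X ^ n * G n) := by
  rw [sum_range_succ, mul_add, map_add, ← mul_assoc, ← pow_succ', coeff_X_pow_mul',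
    if_neg (by omega), add_zero, mul_sum]
  simp only [← mul_assoc, ← pow_succ']

lemma coeff_succ_one_sub_C_mul_X_mul (c : R) (f : R⟦X⟧) (n : ℕ) :
    coeff (n + 1) ((1 - C c * X) * f) = coeff (n + 1) f - c * coeff n f := by
  rw [sub_mul, one_mul, map_sub, mul_assoc, coeff_C_mul, coeff_succ_X_mul]

end Truncation

section QSeries

variable {K : Type*} [Field K] {q : K}

@[simp] lemma pochQ_zero (q : K) : pochQ q 0 = 1 :=
  prod_range_zero _

lemma pochQ_succ (q : K) (n : ℕ) : pochQ q (n + 1) = pochQ q n * (1 - q ^ (n + 1)) :=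
  prod_range_succ _ _

lemma one_sub_pow_succ_ne_zero (hq : ∀ m : ℕ, 1 ≤ m → q ^ m ≠ 1) (n : ℕ) :
    1 - q ^ (n + 1) ≠ 0 :=
  sub_ne_zero.2 (hq (n + 1) n.succ_pos).symm

lemma pochQ_ne_zero (hq : ∀ m : ℕ, 1 ≤ m → q ^ m ≠ 1) (n : ℕ) : pochQ q n ≠ 0 :=
  prod_ne_zero_iff.2 fun k _ => one_sub_pow_succ_ne_zero hq k

/-- Euler's expansion of `(cX; q)_∞ = ∏ₖ (1 - c qᵏ X)`; `qExp q c` below expands its inverse. -/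
noncomputable def qPochInf (q c : K) : K⟦X⟧ :=
  mk fun n => (-1) ^ n * q ^ n.choose 2 * c ^ n / pochQ q n

noncomputable def qExp (q c : K) : K⟦X⟧ :=
  mk fun n => c ^ n / pochQ q n

@[simp] lemma coeff_qPochInf (c : K) (n : ℕ) :
    coeff n (qPochInf q c) = (-1) ^ n * q ^ n.choose 2 * c ^ n / pochQ q n :=
  coeff_mk _ _

@[simp] lemma coeff_qExp (c : K) (n : ℕ) : coeff n (qExp q c) = c ^ n / pochQ q n :=
  coeff_mk _ _

@[simp] lemma constantCoeff_qPochInf (c : K) : constantCoeff (qPochInf q c) = 1 := by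
  simp [← coeff_zero_eq_constantCoeff_apply]

@[simp] lemma constantCoeff_qExp (c : K) : constantCoeff (qExp q c) = 1 := by
  simp [← coeff_zero_eq_constantCoeff_apply]

lemma rescale_qPochInf_one (c : K) : rescale c (qPochInf q 1) = qPochInf q c := by
  ext n
  simp only [coeff_rescale, coeff_qPochInf, one_pow]
  ring

lemma rescale_qExp_one (c : K) : rescale c (qExp q 1) = qExp q c := by
  ext n
  simp only [coeff_rescale, coeff_qExp, one_pow]
  ring

lemma qPochInf_eq_one_sub_mul (hq : ∀ m : ℕ, 1 ≤ m → q ^ m ≠ 1) (c : K) :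
    qPochInf q c = (1 - C c * X) * qPochInf q (c * q) := by
  ext (_ | n)
  · simp
  rw [coeff_succ_one_sub_C_mul_X_mul]
  simp only [coeff_qPochInf, pochQ_succ, Nat.choose_succ_succ, Nat.choose_one_right]
  have := pochQ_ne_zero hq n
  have := one_sub_pow_succ_ne_zero hq n
  field_simp
  ring

lemma one_sub_mul_qExp (hq : ∀ m : ℕ, 1 ≤ m → q ^ m ≠ 1) (c : K) :
    (1 - C c * X) * qExp q c = qExp q (c * q) := by
  ext (_ | n)
  · simp
  rw [coeff_succ_one_sub_C_mul_X_mul]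
  simp only [coeff_qExp, pochQ_succ]
  have := pochQ_ne_zero hq n
  have := one_sub_pow_succ_ne_zero hq n
  field_simp
  ring

lemma eq_C_of_rescale_eq (hq : ∀ m : ℕ, 1 ≤ m → q ^ m ≠ 1) {f : K⟦X⟧}
    (hf : rescale q f = f) : f = C (constantCoeff f) := by
  ext (_ | n)
  · simp
  have h := congrArg (coeff (n + 1)) hf
  rw [coeff_rescale] at h
  have : (1 - q ^ (n + 1)) * coeff (n + 1) f = 0 := by linear_combination -h
  simpa [coeff_C] using (mul_eq_zero.1 this).resolve_left (one_sub_pow_succ_ne_zero hq n)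

lemma qPochInf_mul_qExp (hq : ∀ m : ℕ, 1 ≤ m → q ^ m ≠ 1) (c : K) :
    qPochInf q c * qExp q c = 1 := by
  have hX : (1 - X : K⟦X⟧) ≠ 0 := fun h => by simpa using congrArg constantCoeff h
  have hP : rescale q (qPochInf q 1 * qExp q 1) = qPochInf q 1 * qExp q 1 := by
    refine mul_left_cancel₀ hX ?_
    have h1 := qPochInf_eq_one_sub_mul hq 1
    have h2 := one_sub_mul_qExp hq 1
    simp only [map_one, one_mul] at h1 h2
    rw [map_mul, rescale_qPochInf_one, rescale_qExp_one, ← h2, h1]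
    ring
  rw [← rescale_qPochInf_one, ← rescale_qExp_one, ← map_mul, eq_C_of_rescale_eq hq hP]
  simp

lemma qPochInf_eq_prod_mul (hq : ∀ m : ℕ, 1 ≤ m → q ^ m ≠ 1) (c : K) (L : ℕ) :
    qPochInf q c = (∏ t ∈ range L, (1 - C (c * q ^ t) * X)) * qPochInf q (c * q ^ L) := by
  induction L with
  | zero => simp
  | succ L ih =>
    rw [ih, qPochInf_eq_one_sub_mul hq (c * q ^ L), prod_range_succ, pow_succ, mul_assoc c]
    ring

lemma prod_mul_qExp_mul_qPochInf (hq : ∀ m : ℕ, 1 ≤ m → q ^ m ≠ 1) (c : K) (L : ℕ) :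
    (∏ t ∈ range L, (1 - C (c * q ^ t) * X)) * (qExp q c * qPochInf q (c * q ^ L)) = 1 := by
  have h := qPochInf_mul_qExp hq c
  rw [qPochInf_eq_prod_mul hq c L] at h
  linear_combination h

lemma qPochInf_mul_qExp_one (hq : ∀ m : ℕ, 1 ≤ m → q ^ m ≠ 1) :
    qPochInf q q * qExp q 1 = PowerSeries.mk 1 := by
  have h := qPochInf_eq_one_sub_mul hq 1
  rw [map_one, one_mul, one_mul] at h
  calc qPochInf q q * qExp q 1
      = PowerSeries.mk 1 * (1 - X) * (qPochInf q q * qExp q 1) := by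
        rw [mk_one_mul_one_sub_eq_one, one_mul]
    _ = PowerSeries.mk 1 := by
        rw [mul_assoc, ← mul_assoc (1 - X), ← h, qPochInf_mul_qExp hq, mul_one]

lemma prod_one_sub_C_inv_pow_mul_X (hq0 : q ≠ 0) (n : ℕ) :
    ∏ j ∈ range (n + 1), (1 - C (q⁻¹ ^ j) * X)
      = ∏ t ∈ range (n + 1), (1 - C (q⁻¹ ^ n * q ^ t) * X) := by
  rw [← prod_range_reflect]
  refine prod_congr rfl fun t ht => ?_
  have ht : t ≤ n := Nat.lt_succ_iff.1 (mem_range.1 ht)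
  rw [Nat.add_sub_cancel, ← Nat.sub_add_cancel ht, pow_add, Nat.add_sub_cancel, mul_assoc,
    ← mul_pow, inv_mul_cancel₀ hq0, one_pow, mul_one]

lemma inv_prod_one_sub_mul_one_sub (hq0 : q ≠ 0) (hq : ∀ m : ℕ, 1 ≤ m → q ^ m ≠ 1) (n : ℕ) :
    (∏ j ∈ range (n + 1), ((1 - C (q ^ j) * X) * (1 - C (q⁻¹ ^ j) * X)))⁻¹
      = qPochInf q q * qExp q 1 * (qPochInf q (q ^ (n + 1)) * qExp q (q⁻¹ ^ n)) := by
  rw [PowerSeries.inv_eq_iff_mul_eq_one (by simp [map_prod]), prod_mul_distrib,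
    prod_one_sub_C_inv_pow_mul_X hq0]
  have h1 := prod_mul_qExp_mul_qPochInf hq 1 (n + 1)
  have h2 := prod_mul_qExp_mul_qPochInf hq (q⁻¹ ^ n) (n + 1)
  have hshift : q⁻¹ ^ n * q ^ (n + 1) = q := by
    rw [pow_succ, ← mul_assoc, ← mul_pow, inv_mul_cancel₀ hq0, one_pow, one_mul]
  simp only [one_mul, hshift] at h1 h2
  linear_combination
    (∏ t ∈ range (n + 1), (1 - C (q⁻¹ ^ n * q ^ t) * X)) * (qExp q (q⁻¹ ^ n) * qPochInf q q) * h1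
      + h2

end QSeries

section FigureEight

variable {K : Type*} [Field K] {q : K}

lemma coeff_qPochInf_pow_succ (t k : ℕ) :
    coeff k (qPochInf q (q ^ (t + 1))) = (-1) ^ k * q ^ (k * (k + 1) / 2 + t * k) / pochQ q k := by
  have h : k * (k + 1) / 2 = k.choose 2 + k := by
    rw [Nat.choose_two_right, ← Nat.triangle_succ, Nat.add_sub_cancel, mul_comm]
  rw [coeff_qPochInf, h, ← pow_mul]
  ring

lemma coeff_qPochInf_self (k : ℕ) :
    coeff k (qPochInf q q) = (-1) ^ k * q ^ (k * (k + 1) / 2) / pochQ q k := by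
  simpa using coeff_qPochInf_pow_succ (q := q) 0 k

lemma coeff_qExp_inv_pow (t k : ℕ) : coeff k (qExp q (q⁻¹ ^ t)) = (q ^ (t * k))⁻¹ / pochQ q k := by
  rw [coeff_qExp, ← pow_mul, inv_pow]

lemma quiver_summand_eq (hq0 : q ≠ 0) (i1 i2 j1 j2 k1 k2 : ℕ) :
    (-1 : K) ^ (i1 + j1 + k1) *
        q ^ (((i1 * (i1 + 1) / 2 + j1 * (j1 + 1) / 2 + k1 * (k1 + 1) / 2 : ℕ) : ℤ)
            + ((i1 : ℤ) + (i2 : ℤ)) * ((k1 : ℤ) - (k2 : ℤ))) /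
        (pochQ q i1 * pochQ q i2 * pochQ q j1 * pochQ q j2 * pochQ q k1 * pochQ q k2)
      = coeff i1 (qPochInf q q) * coeff i2 (qExp q 1) *
          (coeff j1 (qPochInf q q) * coeff j2 (qExp q 1) *
            (coeff k1 (qPochInf q (q ^ (i1 + i2 + 1))) * coeff k2 (qExp q (q⁻¹ ^ (i1 + i2))))) := by
  have hz : q ^ (((i1 * (i1 + 1) / 2 + j1 * (j1 + 1) / 2 + k1 * (k1 + 1) / 2 : ℕ) : ℤ)
        + ((i1 : ℤ) + (i2 : ℤ)) * ((k1 : ℤ) - (k2 : ℤ)))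
      = q ^ (i1 * (i1 + 1) / 2) * q ^ (j1 * (j1 + 1) / 2)
        * q ^ (k1 * (k1 + 1) / 2 + (i1 + i2) * k1) * (q ^ ((i1 + i2) * k2))⁻¹ := by
    rw [← pow_add, ← pow_add, ← zpow_natCast, ← zpow_natCast q ((i1 + i2) * k2), ← zpow_neg,
      ← zpow_add₀ hq0]
    push_cast
    congr 1
    ring
  rw [hz, coeff_qPochInf_self, coeff_qPochInf_self, coeff_qPochInf_pow_succ, coeff_qExp,
    coeff_qExp, coeff_qExp_inv_pow]
  ring

end FigureEight

/-- Quiver form of the `F_K` invariant of the figure-eight knot from the inverted Habiro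
series, stated coefficientwise in `K⟦X⟧`.  The left-hand side is
`∑_{n≥0} X^{n+1} / ∏_{j=0}^{n} ((1 − Xqʲ)(1 − Xq^{−j}))` (whose `n`-th term has `X`-order
`n+1`, so only `n ≤ N−1` contribute to the coefficient of `X^N`), and the right-hand side
is `X · ∑ (−1)^{i₁+j₁+k₁}
q^{i₁(i₁+1)/2 + j₁(j₁+1)/2 + k₁(k₁+1)/2 + (i₁+i₂)(k₁−k₂)} X^{i₁+i₂+j₁+j₂+k₁+k₂}/∏(q;q)`. -/
theorem figure_eight_inverted_habiro_quiver {K : Type*} [Field K] (q : K) (hq0 : q ≠ 0)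
    (hq : ∀ m : ℕ, 1 ≤ m → q ^ m ≠ 1) (N : ℕ) :
    (PowerSeries.coeff N)
        (∑ n ∈ Finset.range N,
          PowerSeries.X ^ (n + 1) *
            (∏ j ∈ Finset.range (n + 1),
              ((1 - PowerSeries.C (q ^ j) * PowerSeries.X) *
                (1 - PowerSeries.C (q⁻¹ ^ j) * PowerSeries.X)))⁻¹) =
      ∑ i1 ∈ Finset.range (N + 1), ∑ i2 ∈ Finset.range (N + 1),
        ∑ j1 ∈ Finset.range (N + 1), ∑ j2 ∈ Finset.range (N + 1),
          ∑ k1 ∈ Finset.range (N + 1), ∑ k2 ∈ Finset.range (N + 1),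
            if i1 + i2 + j1 + j2 + k1 + k2 + 1 = N then
              (-1 : K) ^ (i1 + j1 + k1) *
                q ^ (((i1 * (i1 + 1) / 2 + j1 * (j1 + 1) / 2 + k1 * (k1 + 1) / 2 : ℕ) : ℤ)
                    + ((i1 : ℤ) + (i2 : ℤ)) * ((k1 : ℤ) - (k2 : ℤ))) /
                (pochQ q i1 * pochQ q i2 * pochQ q j1 * pochQ q j2 *
                  pochQ q k1 * pochQ q k2)
            else 0 := by
  have hAB (m : ℕ) : coeff m (qPochInf q q * qExp q 1) = 1 := by
    rw [qPochInf_mul_qExp_one hq, coeff_mk, Pi.one_apply]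
  have hquiver := X_pow_dvd_sum_six_sub (N + 1) (qPochInf q q) (qExp q 1)
    (fun t => qPochInf q (q ^ (t + 1))) (fun t => qExp q (q⁻¹ ^ t))
  simp only [hAB, map_one, one_mul, ← inv_prod_one_sub_mul_one_sub hq0 hq] at hquiver
  rw [coeff_sum_range_X_pow_succ_mul, coeff_eq_of_X_pow_dvd_sub N.lt_succ_self
    (by rw [← mul_sub]; exact dvd_mul_of_dvd_right (dvd_sub_comm.1 hquiver) X)]
  simp only [mul_sum, map_sum, coeff_X_mul_C_mul_X_pow, quiver_summand_eq hq0]
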